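/- arXiv:1609.08845 — 2 statements merged into one kernel-verified Lean document; each statement's English description precedes it below -/
import Mathlib

section
/- Let D² ∼ Exp(λπ), K > 0, β > 2. Then lim_{s→∞} −(1/s)·log P(log(1 + K·D^{−β}) > s) = 2/β. -/
open MeasureTheory ProbabilityTheory Real Set Filter Topology

/-!
For `s > 0` the event is `{D² < c s}` with `c s = (K / (exp s - 1)) ^ (2 / β)`, and the
exponential tail squeezes its probability between `1 - exp (-(λπ/2) c s)` and `1 - exp (-λπ c s)`
(comparing with `{D² ≤ c s / 2}` avoids having to show `P(D² = c s) = 0`). Since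
`1 - exp (-x) ~ x` as `x → 0⁺` and `log (c s) / s → -2/β`, both bounds have the claimed rate.
-/

theorem tendsto_log_one_sub_exp_neg_sub_log :
    Tendsto (fun x => log (1 - exp (-x)) - log x) (𝓝[>] 0) (𝓝 0) := by
  have hderiv : HasDerivAt (fun x => 1 - exp (-x)) 1 0 := by
    simpa using ((hasDerivAt_neg 0).exp).const_sub 1
  have hratio : Tendsto (fun x => (1 - exp (-x)) / x) (𝓝[>] 0) (𝓝 1) := by
    refine ((hasDerivAt_iff_tendsto_slope.1 hderiv).mono_left (nhdsGT_le_nhdsNE 0)).congr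
      fun x => ?_
    simp [slope_def_field]
  have hlog := (continuousAt_log one_ne_zero).tendsto.comp hratio
  rw [log_one] at hlog
  refine hlog.congr' ?_
  filter_upwards [self_mem_nhdsWithin] with x (hx : 0 < x)
  have : 0 < 1 - exp (-x) := sub_pos.2 (exp_lt_one_iff.2 (neg_lt_zero.2 hx))
  exact log_div this.ne' hx.ne'

theorem tendsto_neg_one_div_mul_log_one_sub_exp_neg {x : ℝ → ℝ} {γ : ℝ}
    (hx : Tendsto x atTop (𝓝[>] 0)) (hlog : Tendsto (fun s => log (x s) / s) atTop (𝓝 (-γ))) :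
    Tendsto (fun s => -(1 / s) * log (1 - exp (-x s))) atTop (𝓝 γ) := by
  have hcorr := tendsto_inv_atTop_zero.mul (tendsto_log_one_sub_exp_neg_sub_log.comp hx)
  have := (hcorr.add hlog).neg
  rw [zero_mul, zero_add, neg_neg] at this
  refine this.congr fun s => ?_
  simp only [Function.comp_apply]
  ring

theorem tendsto_log_exp_sub_one_div_self :
    Tendsto (fun s => log (exp s - 1) / s) atTop (𝓝 1) := by
  have hlog : Tendsto (fun s => log (1 - exp (-s))) atTop (𝓝 0) := by
    have h1 : Tendsto (fun s => 1 - exp (-s)) atTop (𝓝 1) := by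
      simpa using tendsto_const_nhds.sub tendsto_exp_neg_atTop_nhds_zero
    simpa [Function.comp_def] using (continuousAt_log one_ne_zero).tendsto.comp h1
  have := (hlog.div_atTop tendsto_id).const_add 1
  rw [add_zero] at this
  refine this.congr' ?_
  filter_upwards [eventually_gt_atTop 0] with s hs
  have hfactor : exp s - 1 = exp s * (1 - exp (-s)) := by
    rw [mul_sub, mul_one, ← exp_add, add_neg_cancel, exp_zero]
  have hpos : 0 < 1 - exp (-s) := sub_pos.2 (exp_lt_one_iff.2 (neg_lt_zero.2 hs))
  rw [hfactor, log_mul (exp_ne_zero s) hpos.ne', log_exp, id, add_div, div_self hs.ne']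

section Threshold

variable {a K p : ℝ}

theorem tendsto_mul_rpow_div_exp_sub_one (ha : 0 < a) (hK : 0 < K) (hp : 0 < p) :
    Tendsto (fun s => a * (K / (exp s - 1)) ^ p) atTop (𝓝[>] 0) := by
  have hdiv : Tendsto (fun s => K / (exp s - 1)) atTop (𝓝 0) :=
    tendsto_const_nhds.div_atTop (tendsto_atTop_add_const_right _ (-1) tendsto_exp_atTop)
  have hrpow := ((continuousAt_rpow_const 0 p (Or.inr hp.le)).tendsto.comp hdiv).const_mul a
  rw [Function.comp_def, zero_rpow hp.ne', mul_zero] at hrpow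
  refine tendsto_nhdsWithin_iff.2 ⟨hrpow, ?_⟩
  filter_upwards [eventually_gt_atTop 0] with s hs
  exact mul_pos ha (rpow_pos_of_pos (div_pos hK (sub_pos.2 (one_lt_exp_iff.2 hs))) p)

theorem tendsto_log_mul_rpow_div_exp_sub_one_div (ha : a ≠ 0) (hK : 0 < K) :
    Tendsto (fun s => log (a * (K / (exp s - 1)) ^ p) / s) atTop (𝓝 (-p)) := by
  have := (tendsto_const_nhds (x := log a + p * log K)).div_atTop tendsto_id |>.sub
    (tendsto_log_exp_sub_one_div_self.const_mul p)
  rw [zero_sub, mul_one] at this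
  refine this.congr' ?_
  filter_upwards [eventually_gt_atTop 0] with s hs
  have hm : 0 < exp s - 1 := sub_pos.2 (one_lt_exp_iff.2 hs)
  have hdiv : 0 < K / (exp s - 1) := div_pos hK hm
  rw [log_mul ha (rpow_pos_of_pos hdiv p).ne', log_rpow hdiv, log_div hK.ne' hm.ne', id]
  ring

end Threshold

theorem lt_log_one_add_mul_rpow_neg_iff {K β d s q : ℝ} (hK : 0 < K) (hβ : 0 < β) (hd : 0 < d)
    (hs : 0 < s) (hq : 0 < q) :
    s < log (1 + K * d ^ (-β)) ↔ d ^ q < (K / (exp s - 1)) ^ (q / β) := by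
  have hdβ : 0 < d ^ β := rpow_pos_of_pos hd β
  have hm : 0 < exp s - 1 := sub_pos.2 (one_lt_exp_iff.2 hs)
  have hpow : (d ^ β) ^ (q / β) = d ^ q := by
    rw [← rpow_mul hd.le, mul_div_cancel₀ q hβ.ne']
  rw [lt_log_iff_exp_lt (by positivity), rpow_neg hd.le, ← hpow,
    rpow_lt_rpow_iff hdβ.le (div_pos hK hm).le (div_pos hq hβ), lt_div_iff₀ hm,
    ← sub_lt_iff_lt_add', ← div_eq_mul_inv, lt_div_iff₀ hdβ, mul_comm]

theorem toReal_measure_le_eq_one_sub {Ω : Type*} [MeasurableSpace Ω] {μ : Measure Ω}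
    [IsProbabilityMeasure μ] {X : Ω → ℝ} (hX : Measurable X) {t r : ℝ}
    (htail : μ {ω | t < X ω} = ENNReal.ofReal r) (hr : 0 ≤ r) :
    (μ {ω | X ω ≤ t}).toReal = 1 - r := by
  have hcompl : {ω | X ω ≤ t} = {ω | t < X ω}ᶜ := by ext; simp
  rw [hcompl, prob_compl_eq_one_sub (measurableSet_lt measurable_const hX),
    ENNReal.toReal_sub_of_le prob_le_one ENNReal.one_ne_top, htail, ENNReal.toReal_one,
    ENNReal.toReal_ofReal hr]

theorem tendsto_neg_one_div_mul_log_of_le_of_le {f g h : ℝ → ℝ} {L : ℝ}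
    (hf : Tendsto (fun s => -(1 / s) * log (f s)) atTop (𝓝 L))
    (hh : Tendsto (fun s => -(1 / s) * log (h s)) atTop (𝓝 L))
    (hfpos : ∀ᶠ s in atTop, 0 < f s) (hfg : ∀ᶠ s in atTop, f s ≤ g s)
    (hgh : ∀ᶠ s in atTop, g s ≤ h s) :
    Tendsto (fun s => -(1 / s) * log (g s)) atTop (𝓝 L) := by
  have hneg : ∀ᶠ s : ℝ in atTop, -(1 / s) ≤ 0 := by
    filter_upwards [eventually_gt_atTop 0] with s hs
    exact neg_nonpos.2 (by positivity)
  refine tendsto_of_tendsto_of_tendsto_of_le_of_le' hh hf ?_ ?_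
  · filter_upwards [hneg, hfpos, hfg, hgh] with s hs hfs hfgs hghs
    exact mul_le_mul_of_nonpos_left (log_le_log (hfs.trans_le hfgs) hghs) hs
  · filter_upwards [hneg, hfpos, hfg] with s hs hfs hfgs
    exact mul_le_mul_of_nonpos_left (log_le_log hfs hfgs) hs

/-- If `D² ∼ Exp(λπ)`, `K > 0`, `β > 2`, then
`lim_{s→∞} −(1/s)·log P(log(1 + K·D^{−β}) > s) = 2/β`. -/
theorem stmt_4 {Ω : Type*} [MeasureSpace Ω] [IsProbabilityMeasure (ℙ : Measure Ω)]
    (lam K β : ℝ) (hlam : 0 < lam) (hK : 0 < K) (hβ : 2 < β)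
    (D : Ω → ℝ) (hmD : Measurable D) (hDpos : ∀ ω, 0 < D ω)
    (hD2 : ∀ t : ℝ, 0 ≤ t →
      ℙ {ω | t < (D ω) ^ 2} = ENNReal.ofReal (Real.exp (-(lam * Real.pi * t)))) :
    Tendsto (fun s : ℝ =>
        -(1 / s) * Real.log ((ℙ {ω | s < Real.log (1 + K * D ω ^ (-β))}).toReal))
      atTop (nhds (2 / β)) := by
  have hβ0 : 0 < β := by linarith
  have ha : 0 < lam * π := by positivity
  set c : ℝ → ℝ := fun s => (K / (exp s - 1)) ^ (2 / β)
  have hc : ∀ {a}, 0 < a → Tendsto (fun s => a * c s) atTop (𝓝[>] 0) := fun ha =>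
    tendsto_mul_rpow_div_exp_sub_one ha hK (by positivity)
  have hlim : ∀ {a}, 0 < a →
      Tendsto (fun s => -(1 / s) * log (1 - exp (-(a * c s)))) atTop (𝓝 (2 / β)) := fun ha =>
    tendsto_neg_one_div_mul_log_one_sub_exp_neg (hc ha)
      (tendsto_log_mul_rpow_div_exp_sub_one_div ha.ne' hK)
  have hcdf : ∀ t, 0 ≤ t → (ℙ {ω | D ω ^ 2 ≤ t}).toReal = 1 - exp (-(lam * π * t)) :=
    fun t ht => toReal_measure_le_eq_one_sub (hmD.pow_const 2) (hD2 t ht) (exp_nonneg _)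
  have hevent : ∀ s, 0 < s →
      {ω | s < log (1 + K * D ω ^ (-β))} = {ω | D ω ^ 2 < c s} := fun s hs => by
    ext ω
    simpa [rpow_two] using lt_log_one_add_mul_rpow_neg_iff hK hβ0 (hDpos ω) hs two_pos
  have hcpos : ∀ s, 0 < s → 0 < c s := fun s hs =>
    rpow_pos_of_pos (div_pos hK (sub_pos.2 (one_lt_exp_iff.2 hs))) _
  refine tendsto_neg_one_div_mul_log_of_le_of_le (hlim (half_pos ha)) (hlim ha) ?_ ?_ ?_
  · filter_upwards [(hc (half_pos ha)).eventually self_mem_nhdsWithin] with s (hs : 0 < _)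
    exact sub_pos.2 (exp_lt_one_iff.2 (neg_lt_zero.2 hs))
  · filter_upwards [eventually_gt_atTop 0] with s hs
    calc 1 - exp (-(lam * π / 2 * c s)) = (ℙ {ω | D ω ^ 2 ≤ c s / 2}).toReal := by
          rw [hcdf _ (half_pos (hcpos s hs)).le]; ring_nf
      _ ≤ _ := by
          rw [hevent s hs]
          refine ENNReal.toReal_mono (measure_ne_top _ _) (measure_mono fun ω hω => ?_)
          exact hω.out.trans_lt (half_lt_self (hcpos s hs))
  · filter_upwards [eventually_gt_atTop 0] with s hs
    calc _ ≤ (ℙ {ω | D ω ^ 2 ≤ c s}).toReal := by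
          rw [hevent s hs]
          exact ENNReal.toReal_mono (measure_ne_top _ _) (measure_mono fun ω hω => hω.out.le)
      _ = _ := hcdf _ (hcpos s hs).le
end

section
/- Let N be a Poisson random variable with parameter θ > 0 and let c > 1 be a constant. Along any sequence s_n → ∞ with c·s_n ∈ ℕ, one has lim_{n→∞} −(1/(s_n·log s_n))·log P(N + 1 > c·s_n) = c. -/
/-!
With `p m := e^{-θ} θ^m / m!`, the tail `P(N ≥ m)` lies between `p m` and `2 p m` as soon as
`m + 1 ≥ 2θ`, because the later masses decay faster than the geometric series of ratio `1/2`.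
Hence `-log P(N ≥ m) = log m! + O(m) = m log m + O(m)`, and for `m = c s` this is
`c s log s + O(s)`, which is `c s log s` to first order since `log s → ∞`.
-/

open MeasureTheory ProbabilityTheory Real Set Filter Asymptotics Topology
open scoped Nat

lemma log_factorial_le (m : ℕ) : log m ! ≤ m * log m := by
  calc log m ! ≤ log ((m : ℝ) ^ m) :=
        log_le_log (by positivity) (by exact_mod_cast Nat.factorial_le_pow m)
    _ = m * log m := log_pow m m

lemma sub_le_log_factorial (m : ℕ) : m * log m - m ≤ log m ! := by
  rcases Nat.eq_zero_or_pos m with rfl | hm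
  · simp
  have hm' : (0 : ℝ) < m := by exact_mod_cast hm
  have h : (m : ℝ) ^ m ≤ exp m * m ! := by
    have := pow_div_factorial_le_exp (x := (m : ℝ)) hm'.le m
    rwa [div_le_iff₀ (by positivity)] at this
  have := log_le_log (by positivity) h
  rw [log_pow, log_mul (exp_ne_zero _) (by positivity), log_exp] at this
  linarith

noncomputable def poissonMass (θ : ℝ) (k : ℕ) : ℝ := exp (-θ) * θ ^ k / k !

section PoissonMass

variable {θ : ℝ}

lemma poissonMass_pos (hθ : 0 < θ) (k : ℕ) : 0 < poissonMass θ k := by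
  unfold poissonMass; positivity

lemma log_poissonMass (hθ : 0 < θ) (k : ℕ) :
    log (poissonMass θ k) = -θ + k * log θ - log k ! := by
  rw [poissonMass, log_div (by positivity) (by positivity), log_mul (exp_ne_zero _)
    (by positivity), log_exp, log_pow]

lemma poissonMass_add_le (hθ : 0 < θ) (m j : ℕ) :
    poissonMass θ (m + j) ≤ poissonMass θ m * (θ / (m + 1)) ^ j := by
  have hfac : (m ! : ℝ) * (m + 1) ^ j ≤ (m + j)! := by
    exact_mod_cast Nat.factorial_mul_pow_le_factorial
  calc poissonMass θ (m + j) ≤ exp (-θ) * θ ^ (m + j) / (m ! * (m + 1) ^ j) := by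
        unfold poissonMass; gcongr
    _ = poissonMass θ m * (θ / (m + 1)) ^ j := by
        unfold poissonMass; rw [pow_add, div_pow]; field_simp

end PoissonMass

section PoissonTail

variable {Ω : Type*} [MeasureSpace Ω] {θ : ℝ} {N : Ω → ℕ}

lemma poissonMass_le_measure_tail [IsFiniteMeasure (ℙ : Measure Ω)] (hN : ∀ k, ℙ {ω | N ω = k} = .ofReal (poissonMass θ k))
    (m : ℕ) : poissonMass θ m ≤ (ℙ {ω | m ≤ N ω}).toReal := by
  rw [← ENNReal.ofReal_le_iff_le_toReal (measure_ne_top _ _), ← hN m]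
  exact measure_mono fun ω hω => le_of_eq hω.symm

lemma measure_tail_le_two_mul_poissonMass (hθ : 0 < θ)
    (hN : ∀ k, ℙ {ω | N ω = k} = .ofReal (poissonMass θ k)) {m : ℕ} (hm : 2 * θ ≤ m + 1) :
    ℙ {ω | m ≤ N ω} ≤ .ofReal (2 * poissonMass θ m) := by
  have hset : {ω | m ≤ N ω} = ⋃ j : ℕ, {ω | N ω = m + j} := by
    ext ω
    simp only [mem_ofPred_eq, mem_iUnion]
    exact ⟨fun h => ⟨N ω - m, by omega⟩, fun ⟨j, hj⟩ => by omega⟩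
  have hratio : θ / (m + 1) ≤ 2⁻¹ := by
    rw [div_le_iff₀ (by positivity)]; linarith
  have hterm (j : ℕ) :
      ℙ {ω | N ω = m + j} ≤ .ofReal (poissonMass θ m) * .ofReal (2⁻¹) ^ j := by
    rw [hN, ← ENNReal.ofReal_pow (by norm_num), ← ENNReal.ofReal_mul (poissonMass_pos hθ m).le]
    refine ENNReal.ofReal_le_ofReal ((poissonMass_add_le hθ m j).trans ?_)
    have := poissonMass_pos hθ m
    gcongr
  have hhalf : ENNReal.ofReal 2⁻¹ = 2⁻¹ := by
    rw [ENNReal.ofReal_inv_of_pos two_pos, ENNReal.ofReal_ofNat]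
  calc ℙ {ω | m ≤ N ω} ≤ ∑' j : ℕ, ℙ {ω | N ω = m + j} := hset ▸ measure_iUnion_le _
    _ ≤ ∑' j : ℕ, .ofReal (poissonMass θ m) * .ofReal (2⁻¹) ^ j := ENNReal.tsum_le_tsum hterm
    _ = .ofReal (poissonMass θ m) * 2 := by
        rw [ENNReal.tsum_mul_left, ENNReal.tsum_geometric, hhalf, ENNReal.one_sub_inv_two,
          inv_inv]
    _ = .ofReal (2 * poissonMass θ m) := by
        rw [mul_comm, ENNReal.ofReal_mul zero_le_two, ENNReal.ofReal_ofNat]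

lemma isBigO_neg_log_measure_tail [IsFiniteMeasure (ℙ : Measure Ω)] (hθ : 0 < θ)
    (hN : ∀ k, ℙ {ω | N ω = k} = .ofReal (poissonMass θ k)) :
    (fun m : ℕ => -log (ℙ {ω | m ≤ N ω}).toReal - m * log m) =O[atTop] (fun m => (m : ℝ)) := by
  refine IsBigO.of_bound (θ + log 2 + |log θ| + 1) ?_
  filter_upwards [eventually_ge_atTop 1, (tendsto_natCast_atTop_atTop (R := ℝ)).eventually_ge_atTop
    (2 * θ)] with m hm1 hmθ
  have hm1 : (1 : ℝ) ≤ m := by exact_mod_cast hm1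
  have hmass := poissonMass_pos hθ m
  have hlow := log_le_log hmass (poissonMass_le_measure_tail hN m)
  have hup : log (ℙ {ω | m ≤ N ω}).toReal ≤ log 2 + log (poissonMass θ m) := by
    rw [← log_mul two_ne_zero hmass.ne']
    exact log_le_log (hmass.trans_le (poissonMass_le_measure_tail hN m))
      (ENNReal.toReal_le_of_le_ofReal (by positivity)
        (measure_tail_le_two_mul_poissonMass hθ hN (by linarith)))
  rw [log_poissonMass hθ] at hlow hup
  have hlogθ : |m * log θ| ≤ m * |log θ| := by
    rw [abs_mul, Nat.abs_cast]
  have := log_factorial_le m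
  have := sub_le_log_factorial m
  have := log_nonneg one_le_two
  rw [Real.norm_eq_abs, Real.norm_eq_abs, Nat.abs_cast, abs_le]
  constructor <;> nlinarith [abs_le.mp hlogθ, abs_nonneg (log θ)]

end PoissonTail

lemma tendsto_div_mul_log_of_isBigO {f : ℕ → ℝ}
    (hf : (fun m : ℕ => f m - m * log m) =O[atTop] (fun m => (m : ℝ)))
    {c : ℝ} (hc : 0 < c) {s : ℕ → ℝ} (hs : Tendsto s atTop atTop) {m : ℕ → ℕ}
    (hm : ∀ n, (m n : ℝ) = c * s n) :
    Tendsto (fun n => f (m n) / (s n * log (s n))) atTop (𝓝 c) := by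
  have hm_tendsto : Tendsto m atTop atTop := by
    rw [← tendsto_natCast_atTop_iff (R := ℝ)]
    simpa only [hm] using hs.const_mul_atTop hc
  have hlog : Tendsto (fun n => log (s n)) atTop atTop := tendsto_log_atTop.comp hs
  have hs_small : (fun n => c * s n) =o[atTop] (fun n => s n * log (s n)) := by
    have h := ((isBigO_refl s atTop).const_mul_left c).mul_isLittleO
      ((isLittleO_one_left_iff ℝ).2 (tendsto_norm_atTop_atTop.comp hlog))
    simpa only [mul_one, mul_assoc] using h
  have herror : Tendsto (fun n => (f (m n) - m n * log (m n)) / (s n * log (s n))) atTop (𝓝 0) :=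
    (((hf.comp_tendsto hm_tendsto).congr_right fun n => hm n).trans_isLittleO
      hs_small).tendsto_div_nhds_zero
  have hmain : Tendsto (fun n => c * (1 + log c / log (s n))) atTop (𝓝 c) := by
    simpa using (tendsto_const_nhds.div_atTop hlog).const_add 1 |>.const_mul c
  refine (zero_add c ▸ herror.add hmain).congr' ?_
  filter_upwards [hs.eventually_gt_atTop 1] with n hn
  have hlog_pos : 0 < log (s n) := log_pos hn
  rw [hm, log_mul hc.ne' (by linarith)]
  field_simp
  ring

theorem stmt_6_general {Ω : Type*} [MeasureSpace Ω] [IsProbabilityMeasure (ℙ : Measure Ω)]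
    (θ c : ℝ) (hθ : 0 < θ) (hc : 1 < c)
    (N : Ω → ℕ)
    (hN : ∀ k : ℕ, ℙ {ω | N ω = k} =
      ENNReal.ofReal (Real.exp (-θ) * θ ^ k / (Nat.factorial k)))
    (s : ℕ → ℝ) (hs : Tendsto s atTop atTop)
    (hcs : ∀ n, ∃ m : ℕ, c * s n = (m : ℝ)) :
    Tendsto (fun n =>
        -(1 / (s n * Real.log (s n))) *
          Real.log ((ℙ {ω | c * s n < (N ω : ℝ) + 1}).toReal))
      atTop (nhds c) := by
  choose m hm using hcs
  have hevent (n : ℕ) : {ω | c * s n < (N ω : ℝ) + 1} = {ω | m n ≤ N ω} := by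
    ext ω
    rw [mem_ofPred_eq, mem_ofPred_eq, hm, ← Nat.cast_add_one, Nat.cast_lt, Nat.lt_add_one_iff]
  have h := tendsto_div_mul_log_of_isBigO (isBigO_neg_log_measure_tail hθ hN)
    (by linarith) hs fun n => (hm n).symm
  refine h.congr fun n => ?_
  rw [hevent]
  ring

/-- For `N ∼ Poisson(θ)` and `c > 1`, along any sequence `s_n → ∞` with `c·s_n ∈ ℕ`,
`lim_{n→∞} −(1/(s_n·log s_n))·log P(N + 1 > c·s_n) = c`. -/
theorem stmt_6 {Ω : Type*} [MeasureSpace Ω] [IsProbabilityMeasure (ℙ : Measure Ω)]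
    (θ c : ℝ) (hθ : 0 < θ) (hc : 1 < c)
    (N : Ω → ℕ) (hmN : Measurable N)
    (hN : ∀ k : ℕ, ℙ {ω | N ω = k} =
      ENNReal.ofReal (Real.exp (-θ) * θ ^ k / (Nat.factorial k)))
    (s : ℕ → ℝ) (hs : Tendsto s atTop atTop)
    (hcs : ∀ n, ∃ m : ℕ, c * s n = (m : ℝ)) :
    Tendsto (fun n =>
        -(1 / (s n * Real.log (s n))) *
          Real.log ((ℙ {ω | c * s n < (N ω : ℝ) + 1}).toReal))
      atTop (nhds c) :=
  stmt_6_general θ c hθ hc N hN s hs hcs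
end
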